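/- arXiv:0708.2366 — 3 statements merged into one kernel-verified Lean document; each statement's English description precedes it below -/
import Mathlib

section
/- Let K be a compact Hausdorff space and Y a Banach space containing C(K) as a closed subspace. If there exists a weak*-continuous map ρ : K → Y* such that for each t ∈ K, ρ(t) is a norm-preserving extension of the Dirac functional δ_t, then there is a contractive linear projection from Y onto C(K). -/
/-! Evaluating the extensions pointwise, `P y := (t ↦ ρ t y)`, gives the projection: weak*-continuity
of `ρ` makes `P y` continuous on `K`, `‖ρ t‖ = 1` makes `P` contractive, and `ρ t ∘ j = δ_t` makes
`P` the identity on `C(K)`. -/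

section

variable {𝕜 K Y : Type*} [NontriviallyNormedField 𝕜] [TopologicalSpace K] [CompactSpace K]
  [NormedAddCommGroup Y] [NormedSpace 𝕜 Y]

theorem exists_continuousLinearMap_apply_eq_of_continuous_toWeakDual (ρ : K → StrongDual 𝕜 Y)
    (hρ : Continuous fun t => StrongDual.toWeakDual (ρ t)) {C : ℝ} (hC₀ : 0 ≤ C)
    (hC : ∀ t, ‖ρ t‖ ≤ C) :
    ∃ P : Y →L[𝕜] C(K, 𝕜), ‖P‖ ≤ C ∧ ∀ y t, P y t = ρ t y := by
  let L : Y →ₗ[𝕜] C(K, 𝕜) :=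
    { toFun := fun y => ⟨fun t => ρ t y, (WeakDual.eval_continuous y).comp hρ⟩
      map_add' := fun y z => ContinuousMap.ext fun t => map_add (ρ t) y z
      map_smul' := fun c y => ContinuousMap.ext fun t => map_smul (ρ t) c y }
  have hL : ∀ y, ‖L y‖ ≤ C * ‖y‖ := fun y =>
    (ContinuousMap.norm_le _ (by positivity)).mpr fun t =>
      (ρ t).le_of_opNorm_le (hC t) y
  exact ⟨L.mkContinuous C hL, L.mkContinuous_norm_le hC₀ hL, fun _ _ => rfl⟩

end

theorem continuous_extension_implies_contractive_projection_general
    {K : Type*} [TopologicalSpace K] [CompactSpace K]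
    {Y : Type*} [NormedAddCommGroup Y] [NormedSpace ℝ Y]
    (j : C(K, ℝ) →ₗᵢ[ℝ] Y)
    (ρ : K → StrongDual ℝ Y)
    (hcont : Continuous fun t => StrongDual.toWeakDual (ρ t))
    (hnorm : ∀ t, ‖ρ t‖ = 1)
    (hext : ∀ (t : K) (a : C(K, ℝ)), ρ t (j a) = a t) :
    ∃ P : Y →L[ℝ] C(K, ℝ), ‖P‖ ≤ 1 ∧ ∀ a : C(K, ℝ), P (j a) = a := by
  obtain ⟨P, hP_norm, hP_apply⟩ :=
    exists_continuousLinearMap_apply_eq_of_continuous_toWeakDual ρ hcont zero_le_one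
      fun t => (hnorm t).le
  exact ⟨P, hP_norm, fun a => ContinuousMap.ext fun t => (hP_apply (j a) t).trans (hext t a)⟩

/-- If `Y` contains `C(K)` as a closed subspace (via the isometric embedding
`j`) and there is a weak*-continuous selection `ρ : K → Y*` of norm-preserving extensions of the
Dirac functionals `δ_t`, then there is a contractive projection from `Y` onto `C(K)`. -/
theorem continuous_extension_implies_contractive_projection
    {K : Type*} [TopologicalSpace K] [CompactSpace K] [T2Space K]
    {Y : Type*} [NormedAddCommGroup Y] [NormedSpace ℝ Y] [CompleteSpace Y]
    (j : C(K, ℝ) →ₗᵢ[ℝ] Y)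
    (ρ : K → StrongDual ℝ Y)
    (hcont : Continuous fun t => StrongDual.toWeakDual (ρ t))
    (hnorm : ∀ t, ‖ρ t‖ = 1)
    (hext : ∀ (t : K) (a : C(K, ℝ)), ρ t (j a) = a t) :
    ∃ P : Y →L[ℝ] C(K, ℝ), ‖P‖ ≤ 1 ∧ ∀ a : C(K, ℝ), P (j a) = a :=
  continuous_extension_implies_contractive_projection_general j ρ hcont hnorm hext
end

section
/- Let Y be a Banach space and P : Y → Y an M-projection, and Q : Y → Y a contractive projection with P(Y) = Q(Y). Then P = Q. -/
/-!
If `z ∈ ker Q`, split it along `P` as `z = x + w` with `x = P z` and `w ∈ ker P`. Since `Q` fixes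
`range P`, `Q w = -x`, so for every `s` the contraction `Q` maps `s • x - w` to `(s + 1) • x`.
The M-property makes `x` and `w` "max-orthogonal": `‖s • x - w‖ = max ‖s • x‖ ‖w‖`. Scaling `x`
to the length of `w` then gives `‖w‖ + ‖x‖ ≤ ‖w‖`, so `P z = x = 0`. Hence `P` vanishes on
`ker Q`, and `P y = P (Q y) + P (y - Q y) = Q y`.
-/

namespace ContinuousLinearMap

variable {E : Type*} [NormedAddCommGroup E] [NormedSpace ℝ E] {P Q : E →L[ℝ] E}

theorem apply_eq_self_of_mem_range (hQidem : ∀ y, Q (Q y) = Q y) {x : E} (hx : x ∈ Set.range Q) :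
    Q x = x := by
  obtain ⟨a, rfl⟩ := hx
  exact hQidem a

theorem norm_add_eq_max_of_apply_eq_self_of_apply_eq_zero
    (hM : ∀ y, ‖y‖ = max ‖P y‖ ‖y - P y‖) {x w : E} (hx : P x = x) (hw : P w = 0) :
    ‖x + w‖ = max ‖x‖ ‖w‖ := by
  simpa [hx, hw] using hM (x + w)

theorem eq_zero_of_norm_le_one_of_apply_eq_neg
    (hM : ∀ y, ‖y‖ = max ‖P y‖ ‖y - P y‖) (hQ : ‖Q‖ ≤ 1) {x w : E}
    (hPx : P x = x) (hPw : P w = 0) (hQx : Q x = x) (hQw : Q w = -x) : x = 0 := by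
  by_contra hx0
  have hx : 0 < ‖x‖ := norm_pos_iff.mpr hx0
  set s : ℝ := ‖w‖ / ‖x‖
  have hs : s * ‖x‖ = ‖w‖ := div_mul_cancel₀ _ hx.ne'
  have hnorm : ‖s • x - w‖ = ‖w‖ := by
    have hP : P (s • x) = s • x := by rw [map_smul, hPx]
    have hPw' : P (-w) = 0 := by rw [map_neg, hPw, neg_zero]
    rw [sub_eq_add_neg, norm_add_eq_max_of_apply_eq_self_of_apply_eq_zero hM hP hPw', norm_neg,
      norm_smul, Real.norm_of_nonneg (by positivity), hs, max_self]
  have himage : Q (s • x - w) = (s + 1) • x := by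
    rw [map_sub, map_smul, hQx, hQw, add_smul, one_smul, sub_neg_eq_add]
  have himage_norm : ‖(s + 1) • x‖ = ‖w‖ + ‖x‖ := by
    rw [norm_smul, Real.norm_of_nonneg (by positivity), add_mul, hs, one_mul]
  have hle : ‖Q (s • x - w)‖ ≤ ‖s • x - w‖ := (Q.le_of_opNorm_le hQ _).trans_eq (one_mul _)
  rw [himage, himage_norm, hnorm] at hle
  linarith

theorem apply_eq_zero_of_mem_ker_of_norm_le_one (hPidem : ∀ y, P (P y) = P y)
    (hM : ∀ y, ‖y‖ = max ‖P y‖ ‖y - P y‖) (hQ : ‖Q‖ ≤ 1) (hQP : ∀ y, Q (P y) = P y)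
    {z : E} (hz : Q z = 0) : P z = 0 :=
  eq_zero_of_norm_le_one_of_apply_eq_neg (w := z - P z) hM hQ (hPidem z)
    (by rw [map_sub, hPidem, sub_self]) (hQP z) (by rw [map_sub, hz, hQP, zero_sub])

end ContinuousLinearMap

theorem mProjection_eq_contractive_projection_of_range_eq_general
    {Y : Type*} [NormedAddCommGroup Y] [NormedSpace ℝ Y]
    (P Q : Y →L[ℝ] Y)
    (hPidem : ∀ y, P (P y) = P y)
    (hM : ∀ y, ‖y‖ = max ‖P y‖ ‖y - P y‖)
    (hQidem : ∀ y, Q (Q y) = Q y)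
    (hQ : ‖Q‖ ≤ 1)
    (hrange : Set.range P = Set.range Q) :
    P = Q := by
  have hQP : ∀ y, Q (P y) = P y := fun y =>
    ContinuousLinearMap.apply_eq_self_of_mem_range hQidem (hrange ▸ Set.mem_range_self y)
  have hPQ : ∀ y, P (Q y) = Q y := fun y =>
    ContinuousLinearMap.apply_eq_self_of_mem_range hPidem (hrange ▸ Set.mem_range_self y)
  ext y
  have hker : Q (y - Q y) = 0 := by rw [map_sub, hQidem, sub_self]
  calc P y = P (Q y) + P (y - Q y) := by rw [← map_add, add_sub_cancel]
    _ = Q y := by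
      rw [hPQ, ContinuousLinearMap.apply_eq_zero_of_mem_ker_of_norm_le_one hPidem hM hQ hQP hker,
        add_zero]

/-- An M-projection `P` and a contractive projection `Q` on a Banach space `Y`
with the same range coincide. -/
theorem mProjection_eq_contractive_projection_of_range_eq
    {Y : Type*} [NormedAddCommGroup Y] [NormedSpace ℝ Y] [CompleteSpace Y]
    (P Q : Y →L[ℝ] Y)
    (hPidem : ∀ y, P (P y) = P y)
    (hM : ∀ y, ‖y‖ = max ‖P y‖ ‖y - P y‖)
    (hQidem : ∀ y, Q (Q y) = Q y)
    (hQ : ‖Q‖ ≤ 1)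
    (hrange : Set.range P = Set.range Q) :
    P = Q :=
  mProjection_eq_contractive_projection_of_range_eq_general P Q hPidem hM hQidem hQ hrange
end

section
/- Let X be a Banach space such that X* has Pelczynski's property (V), and let Y be a Banach space not containing an isomorphic copy of ℓ^∞. Then every bounded linear operator T : X* → Y is weakly compact. -/
open scoped ENNReal

/-- `Y` contains an isomorphic copy of `ℓ^∞`. -/
def ContainsIsomorphicCopyOfLinfty (Y : Type) [NormedAddCommGroup Y] [NormedSpace ℝ Y] : Prop :=
  ∃ T : lp (fun _ : ℕ => ℝ) ∞ →L[ℝ] Y, ∃ c : ℝ, 0 < c ∧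
    ∀ x : lp (fun _ : ℕ => ℝ) ∞, c * ‖x‖ ≤ ‖T x‖

/-- An operator is weakly compact if the closure (in the weak topology) of the image of the
closed unit ball is weakly compact. -/
def IsWeaklyCompactOperator {Z W : Type} [NormedAddCommGroup Z] [NormedSpace ℝ Z]
    [NormedAddCommGroup W] [NormedSpace ℝ W] (T : Z →L[ℝ] W) : Prop :=
  IsCompact (closure (toWeakSpace ℝ W '' (T '' Metric.closedBall 0 1)))

/-- An operator is unconditionally converging if it maps weakly unconditionally Cauchy series
to unconditionally convergent (summable) series. -/
def IsUnconditionallyConverging {Z W : Type} [NormedAddCommGroup Z] [NormedSpace ℝ Z]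
    [NormedAddCommGroup W] [NormedSpace ℝ W] (T : Z →L[ℝ] W) : Prop :=
  ∀ x : ℕ → Z, (∀ f : StrongDual ℝ Z, Summable fun n => ‖f (x n)‖) →
    Summable fun n => T (x n)

/-- Pelczynski's property (V): every unconditionally converging operator out of `Z` is
weakly compact. -/
def PelczynskiPropertyV (Z : Type) [NormedAddCommGroup Z] [NormedSpace ℝ Z] : Prop :=
  ∀ (W : Type) (_ : NormedAddCommGroup W) (_ : @NormedSpace ℝ W _ _) (_ : @CompleteSpace W _)
    (T : Z →L[ℝ] W), IsUnconditionallyConverging T → IsWeaklyCompactOperator T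

/-!
If `T` is not unconditionally converging, there is a weakly unconditionally Cauchy series `∑ xₙ`
in `X*` with `∑ T xₙ` divergent. Grouping it into disjoint blocks gives `yₖ ∈ X*` with
`‖T yₖ‖ ≥ ε` and `∑ₖ |yₖ v| < ∞` for every `v ∈ X`. Since `X*` is a dual space, the weak*-sums
`∑ₖ aₖ yₖ` exist, and by Banach–Steinhaus they define a bounded `S : ℓ^∞ → X*` with
`S eₖ = yₖ`. For `R = T ∘ S` and norming functionals `gₖ` of `R eₖ`, Rosenthal's lemma applied
to the variations of the measures `B ↦ gₖ (R 𝟙_B)` gives an infinite `M ⊆ ℕ` on which these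
variations are small off the diagonal, and then `R` is an isomorphism on `ℓ^∞(M) ≅ ℓ^∞`.
So when `Y` contains no `ℓ^∞`, `T` is unconditionally converging, hence weakly compact by (V).
-/

open scoped lp

section NormOn

variable {ι : Type*}

def supportedBall (B : Set ι) : Set ℓ^∞(ι, ℝ) :=
  {a | ‖a‖ ≤ 1 ∧ ∀ n ∉ B, a n = 0}

lemma zero_mem_supportedBall (B : Set ι) : (0 : ℓ^∞(ι, ℝ)) ∈ supportedBall B :=
  ⟨by simp, fun _ _ => rfl⟩

lemma supportedBall_mono {B B' : Set ι} (h : B ⊆ B') : supportedBall B ⊆ supportedBall B' :=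
  fun _ ⟨ha, hB⟩ => ⟨ha, fun n hn => hB n (fun hnB => hn (h hnB))⟩

lemma add_mem_supportedBall_union {B B' : Set ι} (hBB' : Disjoint B B') {a b : ℓ^∞(ι, ℝ)}
    (ha : a ∈ supportedBall B) (hb : b ∈ supportedBall B') : a + b ∈ supportedBall (B ∪ B') := by
  refine ⟨lp.norm_le_of_forall_le zero_le_one fun n => ?_, fun n hn => ?_⟩
  · by_cases hnB : n ∈ B
    · simpa [hb.2 n (Set.disjoint_left.1 hBB' hnB)] using
        (lp.norm_apply_le_norm ENNReal.top_ne_zero a n).trans ha.1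
    · simpa [ha.2 n hnB] using (lp.norm_apply_le_norm ENNReal.top_ne_zero b n).trans hb.1
  · simp [ha.2 n (fun h => hn (Or.inl h)), hb.2 n (fun h => hn (Or.inr h))]

lemma neg_mem_supportedBall {B : Set ι} {a : ℓ^∞(ι, ℝ)} (ha : a ∈ supportedBall B) :
    -a ∈ supportedBall B :=
  ⟨by simpa using ha.1, fun n hn => by simp [ha.2 n hn]⟩

/-- As a function of `B`, this is the variation on `B` of the finitely additive measure
`B ↦ φ 𝟙_B`. -/
noncomputable def normOn (φ : StrongDual ℝ ℓ^∞(ι, ℝ)) (B : Set ι) : ℝ :=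
  sSup ((fun a => ‖φ a‖) '' supportedBall B)

variable (φ : StrongDual ℝ ℓ^∞(ι, ℝ))

lemma bddAbove_norm_image_supportedBall (B : Set ι) :
    BddAbove ((fun a => ‖φ a‖) '' supportedBall B) := by
  refine ⟨‖φ‖, ?_⟩
  rintro _ ⟨a, ha, rfl⟩
  simpa using φ.le_of_opNorm_le_of_le le_rfl ha.1

lemma norm_apply_le_normOn {B : Set ι} {a : ℓ^∞(ι, ℝ)} (ha : a ∈ supportedBall B) :
    ‖φ a‖ ≤ normOn φ B :=
  le_csSup (bddAbove_norm_image_supportedBall φ B) ⟨a, ha, rfl⟩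

lemma normOn_nonneg (B : Set ι) : 0 ≤ normOn φ B := by
  simpa using norm_apply_le_normOn φ (zero_mem_supportedBall B)

lemma normOn_le_opNorm (B : Set ι) : normOn φ B ≤ ‖φ‖ :=
  csSup_le ⟨_, 0, zero_mem_supportedBall B, rfl⟩
    (by rintro _ ⟨a, ha, rfl⟩; simpa using φ.le_of_opNorm_le_of_le le_rfl ha.1)

lemma normOn_mono : Monotone (normOn φ) := fun _ _ h =>
  csSup_le_csSup (bddAbove_norm_image_supportedBall φ _) ⟨_, 0, zero_mem_supportedBall _, rfl⟩
    (Set.image_mono (supportedBall_mono h))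

lemma norm_apply_le_mul_normOn {B : Set ι} {a : ℓ^∞(ι, ℝ)} (ha : ∀ n ∉ B, a n = 0) :
    ‖φ a‖ ≤ ‖a‖ * normOn φ B := by
  rcases eq_or_ne a 0 with rfl | ha0
  · simp
  have hna : 0 < ‖a‖ := norm_pos_iff.2 ha0
  have hmem : ‖a‖⁻¹ • a ∈ supportedBall B :=
    ⟨by rw [norm_smul, norm_inv, norm_norm, inv_mul_cancel₀ hna.ne'],
      fun n hn => by simp [ha n hn]⟩
  have hle := norm_apply_le_normOn φ hmem
  rwa [map_smul, norm_smul, norm_inv, norm_norm, inv_mul_le_iff₀ hna] at hle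

lemma normOn_add_normOn_le_union {B B' : Set ι} (hBB' : Disjoint B B') :
    normOn φ B + normOn φ B' ≤ normOn φ (B ∪ B') := by
  have key : ∀ a ∈ supportedBall B, ∀ b ∈ supportedBall B',
      ‖φ a‖ + ‖φ b‖ ≤ normOn φ (B ∪ B') := by
    intro a ha b hb
    have hplus := norm_apply_le_normOn φ (add_mem_supportedBall_union hBB' ha hb)
    have hminus := norm_apply_le_normOn φ
      (add_mem_supportedBall_union hBB' ha (neg_mem_supportedBall hb))
    rw [map_add, Real.norm_eq_abs] at hplus
    rw [map_add, map_neg, Real.norm_eq_abs] at hminus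
    rw [Real.norm_eq_abs, Real.norm_eq_abs]
    -- `|s| + |t| = max |s + t| |s - t|`
    cases abs_cases (φ a) <;> cases abs_cases (φ b) <;>
      cases abs_cases (φ a + φ b) <;> cases abs_cases (φ a + -φ b) <;> linarith
  have hne : ∀ B : Set ι, ((fun a => ‖φ a‖) '' supportedBall B).Nonempty :=
    fun B => (Set.nonempty_of_mem (zero_mem_supportedBall B)).image _
  rw [normOn, normOn, ← csSup_add (hne B) (bddAbove_norm_image_supportedBall φ B) (hne B')
    (bddAbove_norm_image_supportedBall φ B')]
  refine csSup_le ((hne B).add (hne B')) ?_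
  intro r hr
  obtain ⟨_, ⟨a, ha, rfl⟩, _, ⟨b, hb, rfl⟩, rfl⟩ := Set.mem_add.1 hr
  exact key a ha b hb

end NormOn

section RosenthalLemma

open Function

lemma exists_pairwise_disjoint_infinite :
    ∃ N : ℕ → Set ℕ, (∀ p, (N p).Infinite) ∧ Pairwise (Disjoint on N) := by
  refine ⟨fun p => Set.range (Nat.pair p), fun p => Set.infinite_range_of_injective ?_, ?_⟩
  · intro q q' h
    simpa using congrArg (fun m => (Nat.unpair m).2) h
  · intro p p' hpp'
    refine Set.disjoint_left.2 ?_
    rintro _ ⟨q, rfl⟩ ⟨q', h⟩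
    exact hpp' (by simpa using congrArg (fun m => (Nat.unpair m).1) h.symm)

variable {μ : ℕ → Set ℕ → ℝ}

lemma exists_infinite_forall_le_of_le_nat_mul (hmono : ∀ k, Monotone (μ k))
    (hadd : ∀ k A B, Disjoint A B → μ k A + μ k B ≤ μ k (A ∪ B)) {ε : ℝ} (hε : 0 ≤ ε)
    (n : ℕ) (hbound : ∀ k, μ k Set.univ ≤ n * ε) :
    ∃ M : Set ℕ, M.Infinite ∧ ∀ k ∈ M, μ k (M \ {k}) ≤ ε := by
  induction n generalizing μ with
  | zero =>
    refine ⟨Set.univ, Set.infinite_univ, fun k _ => ?_⟩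
    have := (hmono k (Set.subset_univ (Set.univ \ {k}))).trans (hbound k)
    rw [Nat.cast_zero, zero_mul] at this
    linarith
  | succ n ih =>
    obtain ⟨N, hNinf, hNdisj⟩ := exists_pairwise_disjoint_infinite
    by_cases hgood : ∃ p, {k | k ∈ N p ∧ μ k (N p \ {k}) ≤ ε}.Infinite
    · obtain ⟨p, hp⟩ := hgood
      refine ⟨_, hp, fun k hk => (hmono k ?_).trans hk.2⟩
      exact Set.sdiff_subset_sdiff_left fun m hm => hm.1
    push Not at hgood
    have hbad : ∀ p, ∃ k ∈ N p, ε < μ k (N p \ {k}) := fun p => by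
      obtain ⟨k, hkN, hk⟩ := ((hNinf p).sdiff (hgood p)).nonempty
      exact ⟨k, hkN, lt_of_not_ge fun h => hk ⟨hkN, h⟩⟩
    choose κ hκN hκ using hbad
    have hκinj : Injective κ := fun p p' h => by
      by_contra hpp'
      exact Set.disjoint_left.1 (hNdisj hpp') (hκN p) (h ▸ hκN p')
    -- `ν p` measures with `μ (κ p)` what lies outside `N p`, where `μ (κ p)` has mass `> ε`.
    let ν : ℕ → Set ℕ → ℝ := fun p A => μ (κ p) (κ '' A \ N p)
    have hνmono : ∀ p, Monotone (ν p) := fun p A B h =>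
      hmono (κ p) (Set.sdiff_subset_sdiff_left (Set.image_mono h))
    have hνadd : ∀ p A B, Disjoint A B → ν p A + ν p B ≤ ν p (A ∪ B) := by
      intro p A B hAB
      have h := hadd (κ p) (κ '' A \ N p) (κ '' B \ N p)
        (((Set.disjoint_image_iff hκinj).2 hAB).mono Set.sdiff_subset Set.sdiff_subset)
      rwa [← Set.union_sdiff_distrib, ← Set.image_union] at h
    have hνbound : ∀ p, ν p Set.univ ≤ n * ε := by
      intro p
      have h := (hadd (κ p) _ _ (Set.disjoint_sdiff_right.mono_left Set.sdiff_subset)).trans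
        (hmono (κ p) (Set.subset_univ ((N p \ {κ p}) ∪ (κ '' Set.univ \ N p))))
      have := hbound (κ p)
      push_cast at this
      linarith [hκ p]
    obtain ⟨M, hMinf, hM⟩ := ih hνmono hνadd hνbound
    refine ⟨κ '' M, hMinf.image hκinj.injOn, ?_⟩
    rintro _ ⟨p, hp, rfl⟩
    refine (hmono (κ p) ?_).trans (hM p hp)
    rintro _ ⟨⟨q, hq, rfl⟩, hne⟩
    have hqp : q ≠ p := fun h => hne (h ▸ rfl)
    exact ⟨⟨q, ⟨hq, hqp⟩, rfl⟩, Set.disjoint_left.1 (hNdisj hqp) (hκN q)⟩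

theorem rosenthal_lemma (hmono : ∀ k, Monotone (μ k))
    (hadd : ∀ k A B, Disjoint A B → μ k A + μ k B ≤ μ k (A ∪ B)) {C : ℝ}
    (hC : ∀ k, μ k Set.univ ≤ C) {ε : ℝ} (hε : 0 < ε) :
    ∃ M : Set ℕ, M.Infinite ∧ ∀ k ∈ M, μ k (M \ {k}) ≤ ε := by
  obtain ⟨n, hn⟩ := exists_nat_ge (C / ε)
  exact exists_infinite_forall_le_of_le_nat_mul hmono hadd hε.le n
    fun k => (hC k).trans ((div_le_iff₀ hε).1 hn)

end RosenthalLemma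

section ExtendZero

open Function

variable {α β : Type*}

lemma norm_extend_zero_apply_le (f : α → β) (a : ℓ^∞(α, ℝ)) (b : β) :
    ‖extend f a 0 b‖ ≤ ‖a‖ := by
  classical
  rw [extend_def]
  split_ifs
  · exact lp.norm_apply_le_norm ENNReal.top_ne_zero a _
  · simp

noncomputable def extendZeroCLM (f : α → β) : ℓ^∞(α, ℝ) →L[ℝ] ℓ^∞(β, ℝ) :=
  LinearMap.mkContinuous
    { toFun := fun a => ⟨extend f a 0, memℓp_infty ⟨‖a‖, by
        rintro _ ⟨b, rfl⟩
        exact norm_extend_zero_apply_le f a b⟩⟩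
      map_add' := fun a b => lp.ext <| funext fun n => by
        change extend f ⇑(a + b) 0 n = extend f a 0 n + extend f b 0 n
        rw [lp.coeFn_add, ← Pi.add_apply, ← extend_add, add_zero]
      map_smul' := fun c a => lp.ext <| funext fun n => by
        change extend f ⇑(c • a) 0 n = c • extend f a 0 n
        rw [lp.coeFn_smul, ← Pi.smul_apply, ← extend_smul, smul_zero] }
    1 fun a => by
      rw [one_mul]
      exact lp.norm_le_of_forall_le (norm_nonneg a) (norm_extend_zero_apply_le f a)

variable {f : α → β}

lemma extendZeroCLM_apply_apply (hf : Injective f) (a : ℓ^∞(α, ℝ)) (i : α) :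
    extendZeroCLM f a (f i) = a i :=
  hf.extend_apply _ _ i

lemma extendZeroCLM_apply_of_notMem_range (a : ℓ^∞(α, ℝ)) {b : β} (hb : b ∉ Set.range f) :
    extendZeroCLM f a b = 0 :=
  extend_apply' _ _ b hb

lemma norm_extendZeroCLM_apply_le (a : ℓ^∞(α, ℝ)) : ‖extendZeroCLM f a‖ ≤ ‖a‖ :=
  lp.norm_le_of_forall_le (norm_nonneg a) (norm_extend_zero_apply_le f a)

end ExtendZero

section RosenthalTheorem

lemma exists_half_norm_le_norm_apply {ι : Type*} [Nonempty ι] (a : ℓ^∞(ι, ℝ)) :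
    ∃ i, ‖a‖ / 2 ≤ ‖a i‖ := by
  obtain ⟨i⟩ := ‹Nonempty ι›
  by_contra! h
  have : ‖a‖ ≤ ‖a‖ / 2 := lp.norm_le_of_forall_le ((norm_nonneg _).trans (h i).le) fun j => (h j).le
  linarith [h i, norm_nonneg (a i)]

lemma norm_apply_single_sub_le_norm_apply {ι : Type*} [DecidableEq ι]
    (φ : StrongDual ℝ ℓ^∞(ι, ℝ)) {M : Set ι} {a : ℓ^∞(ι, ℝ)} (ha : ∀ n ∉ M, a n = 0) (k : ι) :
    ‖a k‖ * ‖φ (lp.single ∞ k 1)‖ - ‖a‖ * normOn φ (M \ {k}) ≤ ‖φ a‖ := by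
  set b := a - a k • lp.single ∞ k (1 : ℝ)
  have hb : ∀ n, b n = if n = k then 0 else a n := fun n => by
    rw [lp.coeFn_sub, Pi.sub_apply, lp.coeFn_smul, Pi.smul_apply, lp.single_apply]
    by_cases hn : n = k <;> simp [hn]
  have hbM : ∀ n ∉ M \ {k}, b n = 0 := fun n hn => by
    rw [hb]
    split_ifs with hnk
    · rfl
    · exact ha n fun hnM => hn ⟨hnM, hnk⟩
  have hbnorm : ‖b‖ ≤ ‖a‖ := lp.norm_le_of_forall_le (norm_nonneg a) fun n => by
    rw [hb]
    split_ifs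
    · simp
    · exact lp.norm_apply_le_norm ENNReal.top_ne_zero a n
  have hφa : φ a = a k * φ (lp.single ∞ k 1) + φ b := by
    simp [b]
  calc ‖a k‖ * ‖φ (lp.single ∞ k 1)‖ - ‖a‖ * normOn φ (M \ {k})
      ≤ ‖a k * φ (lp.single ∞ k 1)‖ - ‖φ b‖ := by
        rw [norm_mul]
        gcongr
        exact (norm_apply_le_mul_normOn φ hbM).trans
          (mul_le_mul_of_nonneg_right hbnorm (normOn_nonneg φ _))
    _ ≤ ‖φ a‖ := by
        rw [hφa]
        exact sub_le_iff_le_add.2 (norm_le_add_norm_add _ _)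

theorem containsIsomorphicCopyOfLinfty_of_le_norm_single {Y : Type} [NormedAddCommGroup Y]
    [NormedSpace ℝ Y] (R : ℓ^∞(ℕ, ℝ) →L[ℝ] Y) {ε : ℝ} (hε : 0 < ε)
    (hR : ∀ k, ε ≤ ‖R (lp.single ∞ k 1)‖) : ContainsIsomorphicCopyOfLinfty Y := by
  have hg : ∀ k, ∃ g : StrongDual ℝ Y, ‖g‖ = 1 ∧ g (R (lp.single ∞ k 1)) = ‖R (lp.single ∞ k 1)‖ :=
    fun k => exists_dual_vector ℝ _ (by linarith [hR k])
  choose g hg1 hgR using hg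
  let φ : ℕ → StrongDual ℝ ℓ^∞(ℕ, ℝ) := fun k => (g k).comp R
  have hφ : ∀ k, ‖φ k‖ ≤ ‖R‖ := fun k =>
    ((g k).opNorm_comp_le R).trans (by rw [hg1, one_mul])
  obtain ⟨M, hMinf, hM⟩ := rosenthal_lemma (fun k => normOn_mono (φ k))
    (fun k _ _ h => normOn_add_normOn_le_union (φ k) h)
    (fun k => (normOn_le_opNorm (φ k) Set.univ).trans (hφ k)) (by positivity : 0 < ε / 4)
  let ι : ℕ → ℕ := fun q => hMinf.natEmbedding M q
  have hι : Function.Injective ι := fun _ _ h => hMinf.natEmbedding M |>.injective (Subtype.ext h)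
  refine ⟨R.comp (extendZeroCLM ι), ε / 4, by positivity, fun a => ?_⟩
  obtain ⟨q, hq⟩ := exists_half_norm_le_norm_apply a
  set c := extendZeroCLM ι a
  have hcM : ∀ n ∉ M, c n = 0 := fun n hn => extendZeroCLM_apply_of_notMem_range a <| by
    rintro ⟨p, rfl⟩
    exact hn (hMinf.natEmbedding M p).2
  have hc := norm_apply_single_sub_le_norm_apply (φ (ι q)) hcM (ι q)
  rw [extendZeroCLM_apply_apply hι] at hc
  have hdiag : ‖a‖ / 2 * ε ≤ ‖a q‖ * ‖φ (ι q) (lp.single ∞ (ι q) 1)‖ := by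
    have : ‖φ (ι q) (lp.single ∞ (ι q) 1)‖ = ‖R (lp.single ∞ (ι q) 1)‖ := by
      simp [φ, hgR]
    rw [this]
    exact mul_le_mul hq (hR _) hε.le (norm_nonneg _)
  have hoff : ‖c‖ * normOn (φ (ι q)) (M \ {ι q}) ≤ ‖a‖ * (ε / 4) :=
    mul_le_mul (norm_extendZeroCLM_apply_le a) (hM _ (hMinf.natEmbedding M q).2)
      (normOn_nonneg _ _) (norm_nonneg a)
  calc ε / 4 * ‖a‖ ≤ ‖φ (ι q) c‖ := by linarith
    _ ≤ ‖R c‖ := by simpa [φ, hg1] using (g (ι q)).le_opNorm (R c)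

end RosenthalTheorem

section DualSeries

open Function

lemma exists_pairwise_disjoint_finset {α : Type*} [DecidableEq α] {P : Finset α → Prop}
    (h : ∀ s, ∃ t, Disjoint t s ∧ P t) :
    ∃ t : ℕ → Finset α, Pairwise (Disjoint on t) ∧ ∀ k, P (t k) := by
  choose u hu hP using h
  -- `A k` is the union of the first `k` chosen blocks.
  let A : ℕ → Finset α := fun k => Nat.rec ∅ (fun _ s => s ∪ u s) k
  have hA : Monotone A := monotone_nat_of_le_succ fun k => Finset.subset_union_left
  refine ⟨fun k => u (A k), (pairwise_disjoint_on _).2 fun j k hjk => ?_, fun k => hP _⟩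
  exact ((hu (A k)).mono_right
    ((Finset.subset_union_right : u (A j) ⊆ A (j + 1)).trans (hA hjk))).symm

lemma Summable.sum_finset_of_pairwise_disjoint {α : Type*} {f : α → ℝ} (hf0 : 0 ≤ f)
    (hf : Summable f) {t : ℕ → Finset α} (ht : Pairwise (Disjoint on t)) :
    Summable fun k => ∑ n ∈ t k, f n := by
  classical
  refine summable_of_sum_le (c := ∑' n, f n) (fun k => Finset.sum_nonneg fun n _ => hf0 n)
    fun s => ?_
  rw [← Finset.sum_biUnion (ht.set_pairwise _)]
  exact hf.sum_le_tsum _ fun n _ => hf0 n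

variable {X : Type*} [NormedAddCommGroup X] [NormedSpace ℝ X] [CompleteSpace X]

lemma exists_tsum_norm_apply_le (y : ℕ → StrongDual ℝ X) (hy : ∀ v, Summable fun k => ‖y k v‖) :
    ∃ C, ∀ v, ∑' k, ‖y k v‖ ≤ C * ‖v‖ := by
  classical
  have hbdd : ∀ v, ∃ C, ∀ s : Finset ℕ, ‖(∑ k ∈ s, y k) v‖ ≤ C := fun v =>
    ⟨∑' k, ‖y k v‖, fun s => by
      rw [sum_apply]
      exact (norm_sum_le _ _).trans ((hy v).sum_le_tsum s fun _ _ => norm_nonneg _)⟩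
  obtain ⟨C, hC⟩ := banach_steinhaus hbdd
  have hpart : ∀ v s, |∑ k ∈ s, y k v| ≤ C * ‖v‖ := fun v s => by
    rw [← sum_apply, ← Real.norm_eq_abs]
    exact ((∑ k ∈ s, y k).le_opNorm v).trans (mul_le_mul_of_nonneg_right (hC s) (norm_nonneg v))
  refine ⟨2 * C, fun v => (hy v).tsum_le_of_sum_le fun s => ?_⟩
  -- On each sign class of `y k v`, the sum of `‖y k v‖` is `±` a single partial sum.
  rw [← Finset.sum_filter_add_sum_filter_not s (fun k => 0 ≤ y k v)]
  have hpos : ∑ k ∈ s with 0 ≤ y k v, ‖y k v‖ = ∑ k ∈ s with 0 ≤ y k v, y k v :=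
    Finset.sum_congr rfl fun k hk => Real.norm_of_nonneg (Finset.mem_filter.1 hk).2
  have hneg : ∑ k ∈ s with ¬0 ≤ y k v, ‖y k v‖ = -∑ k ∈ s with ¬0 ≤ y k v, y k v := by
    rw [← Finset.sum_neg_distrib]
    exact Finset.sum_congr rfl fun k hk =>
      Real.norm_of_nonpos (le_of_lt (not_le.1 (Finset.mem_filter.1 hk).2))
  rw [hpos, hneg]
  linarith [le_abs_self (∑ k ∈ s with 0 ≤ y k v, y k v),
    neg_le_abs (∑ k ∈ s with ¬0 ≤ y k v, y k v),
    hpart v (s.filter fun k => 0 ≤ y k v), hpart v (s.filter fun k => ¬0 ≤ y k v)]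

lemma exists_clm_lp_single_eq (y : ℕ → StrongDual ℝ X) (hy : ∀ v, Summable fun k => ‖y k v‖) :
    ∃ S : ℓ^∞(ℕ, ℝ) →L[ℝ] StrongDual ℝ X, ∀ k, S (lp.single ∞ k 1) = y k := by
  classical
  obtain ⟨C, hC⟩ := exists_tsum_norm_apply_le y hy
  have hbound : ∀ (a : ℓ^∞(ℕ, ℝ)) v k, ‖a k * y k v‖ ≤ ‖a‖ * ‖y k v‖ := fun a v k => by
    rw [norm_mul]
    exact mul_le_mul_of_nonneg_right (lp.norm_apply_le_norm ENNReal.top_ne_zero a k) (norm_nonneg _)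
  have hsum : ∀ (a : ℓ^∞(ℕ, ℝ)) v, Summable fun k => a k * y k v := fun a v =>
    ((hy v).mul_left ‖a‖).of_norm_bounded (hbound a v)
  let B : ℓ^∞(ℕ, ℝ) →ₗ[ℝ] X →ₗ[ℝ] ℝ := LinearMap.mk₂ ℝ (fun a v => ∑' k, a k * y k v)
    (fun a b v => by simp [add_mul, (hsum a v).tsum_add (hsum b v)])
    (fun c a v => by simp [mul_assoc, tsum_mul_left])
    (fun a v w => by simp [mul_add, (hsum a v).tsum_add (hsum a w)])
    (fun c a v => by simp [mul_left_comm, tsum_mul_left])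
  refine ⟨B.mkContinuous₂ C fun a v => ?_, fun k => ?_⟩
  · calc ‖∑' k, a k * y k v‖ ≤ ‖a‖ * ∑' k, ‖y k v‖ :=
          tsum_of_norm_bounded ((hy v).hasSum.mul_left ‖a‖) (hbound a v)
      _ ≤ C * ‖a‖ * ‖v‖ := by nlinarith [hC v, norm_nonneg a]
  · ext v
    change ∑' n, (lp.single ∞ k 1 : ℓ^∞(ℕ, ℝ)) n * y n v = y k v
    rw [tsum_eq_single k fun n hn => by simp [hn]]
    simp

end DualSeries

theorem containsIsomorphicCopyOfLinfty_of_not_summable {X Y : Type} [NormedAddCommGroup X]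
    [NormedSpace ℝ X] [CompleteSpace X] [NormedAddCommGroup Y] [NormedSpace ℝ Y] [CompleteSpace Y]
    (T : StrongDual ℝ X →L[ℝ] Y) (x : ℕ → StrongDual ℝ X)
    (hx : ∀ v, Summable fun n => ‖x n v‖) (hTx : ¬Summable fun n => T (x n)) :
    ContainsIsomorphicCopyOfLinfty Y := by
  classical
  obtain ⟨ε, hε, hbig⟩ : ∃ ε > 0, ∀ s : Finset ℕ, ∃ t, Disjoint t s ∧ ε ≤ ‖∑ n ∈ t, T (x n)‖ := by
    simpa [summable_iff_vanishing_norm] using hTx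
  obtain ⟨t, ht, hTt⟩ := exists_pairwise_disjoint_finset hbig
  let y : ℕ → StrongDual ℝ X := fun k => ∑ n ∈ t k, x n
  have hy : ∀ v, Summable fun k => ‖y k v‖ := fun v =>
    ((hx v).sum_finset_of_pairwise_disjoint (fun _ => norm_nonneg _) ht).of_nonneg_of_le
      (fun _ => norm_nonneg _) fun k => by simpa [y] using norm_sum_le (t k) fun n => x n v
  obtain ⟨S, hS⟩ := exists_clm_lp_single_eq y hy
  exact containsIsomorphicCopyOfLinfty_of_le_norm_single (T.comp S) hε fun k => by
    simpa [hS, y, map_sum] using hTt k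

/-- If `X*` has Pelczynski's property (V) and `Y` contains no isomorphic copy
of `ℓ^∞`, then every bounded linear operator `T : X* → Y` is weakly compact. -/
theorem operator_from_dual_weakly_compact
    {X Y : Type} [NormedAddCommGroup X] [NormedSpace ℝ X] [CompleteSpace X]
    [NormedAddCommGroup Y] [NormedSpace ℝ Y] [CompleteSpace Y]
    (hV : PelczynskiPropertyV (StrongDual ℝ X))
    (hY : ¬ ContainsIsomorphicCopyOfLinfty Y)
    (T : StrongDual ℝ X →L[ℝ] Y) :
    IsWeaklyCompactOperator T := by
  refine hV Y inferInstance inferInstance inferInstance T fun x hx => ?_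
  by_contra hTx
  exact hY <| containsIsomorphicCopyOfLinfty_of_not_summable T x
    (fun v => hx (NormedSpace.inclusionInDoubleDual ℝ X v)) hTx
end
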